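/- arXiv:1803.09270 — 3 statements merged into one kernel-verified Lean document; each statement's English description precedes it below -/
import Mathlib

section
/- For every c ∈ ℝ with 0 < c < 1 and every w ∈ ℝ, |g_c(w)| ≤ C·(1/c + 1/(1−c)) for some absolute constant C, where g_c(w) := sinh(2πw/3)/(cosh(2πw/3) − cos(2πc)). -/
open Real

noncomputable def g (c : ℝ) (w : ℝ) : ℝ :=
  Real.sinh (2 * π * w / 3) / (Real.cosh (2 * π * w / 3) - Real.cos (2 * π * c))

/-! With `s = sin (π c)` the denominator of `g c w` is `(cosh x - 1) + 2 s²`, while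
`sinh² x = (cosh x - 1)(cosh x + 1)`; comparing squares gives `|sinh x| · |s| ≤ cosh x - cos (2πc)`,
so `|g c w| ≤ 1 / sin (π c)`. Jordan's inequality `sin (π c) ≥ 2 c (1 - c)` and
`1 / (c (1 - c)) = 1 / c + 1 / (1 - c)` finish the bound with `C = 1 / 2`. -/

lemma abs_sinh_mul_abs_sin_le (x y : ℝ) : |sinh x| * |sin y| ≤ cosh x - cos (2 * y) := by
  have hu : 0 ≤ cosh x - 1 := by linarith [one_le_cosh x]
  have hsinh : sinh x ^ 2 = (cosh x - 1) * (cosh x - 1 + 2) := by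
    rw [sinh_sq]; ring
  have hcos : cos (2 * y) = 1 - 2 * sin y ^ 2 := by
    rw [cos_two_mul', cos_sq']; ring
  have hs : sin y ^ 2 ≤ 1 := sin_sq_le_one y
  rw [← abs_mul]
  refine abs_le_of_sq_le_sq ?_ (by nlinarith [sq_nonneg (sin y)])
  rw [mul_pow, hsinh, hcos]
  -- with `u = cosh x - 1`, `s = sin y`: `u (u + 2) s² ≤ (u + 2 s²)²` termwise, using `u² s² ≤ u²` and `2 u s² ≤ 4 u s²`
  nlinarith [mul_nonneg hu (sq_nonneg (sin y)), mul_nonneg (mul_nonneg hu hu) (sub_nonneg.2 hs)]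

lemma abs_g_mul_abs_sin_le_one (c w : ℝ) : |g c w| * |sin (π * c)| ≤ 1 := by
  set x := 2 * π * w / 3
  have hD : 0 ≤ cosh x - cos (2 * π * c) := by linarith [one_le_cosh x, cos_le_one (2 * π * c)]
  rw [g, abs_div, abs_of_nonneg hD, div_mul_eq_mul_div]
  refine div_le_one_of_le₀ ?_ hD
  simpa only [← mul_assoc] using abs_sinh_mul_abs_sin_le x (π * c)

lemma two_mul_mul_one_sub_le_sin_pi_mul {c : ℝ} (h0 : 0 ≤ c) (h1 : c ≤ 1) :
    2 * c * (1 - c) ≤ sin (π * c) := by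
  wlog hc : c ≤ 1 / 2 generalizing c
  · have := this (c := 1 - c) (by linarith) (by linarith) (by linarith)
    rwa [show π * (1 - c) = π - π * c by ring, sin_pi_sub,
      show 2 * (1 - c) * (1 - (1 - c)) = 2 * c * (1 - c) by ring] at this
  calc 2 * c * (1 - c) ≤ 2 * c := by nlinarith
    _ ≤ sin (π / 2 * (2 * c)) := le_sin_mul (by linarith) (by linarith)
    _ = sin (π * c) := by ring_nf

theorem g_bound : ∃ C : ℝ, ∀ c : ℝ, 0 < c → c < 1 → ∀ w : ℝ,
    |g c w| ≤ C * (1 / c + 1 / (1 - c)) := by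
  refine ⟨1 / 2, fun c hc0 hc1 w => ?_⟩
  have hm : 0 < 2 * c * (1 - c) := by nlinarith
  have hsin := two_mul_mul_one_sub_le_sin_pi_mul hc0.le hc1.le
  have hsin_pos : 0 < sin (π * c) := hm.trans_le hsin
  calc |g c w| ≤ 1 / sin (π * c) := by
        rw [le_div_iff₀ hsin_pos, ← abs_of_pos hsin_pos]
        exact abs_g_mul_abs_sin_le_one c w
    _ ≤ 1 / (2 * c * (1 - c)) := one_div_le_one_div_of_le hm hsin
    _ = 1 / 2 * (1 / c + 1 / (1 - c)) := by
        field_simp [hc0.ne', (sub_pos.2 hc1).ne']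
        ring
end

section
/- For real v > 0 and s ∈ ℝ: ∫_ℝ e^{−2πw²v} · w/(w − is) dw = (1/(2√2)) · ∫₀^∞ e^{−2πts²}/(t + v)^{3/2} dt. -/
open Real Complex MeasureTheory Set

lemma gamma32 : Real.Gamma (3/2) = Real.sqrt π / 2 := by
  have h : (3:ℝ)/2 = 1/2 + 1 := by norm_num
  rw [h, Real.Gamma_add_one (by norm_num), Real.Gamma_one_half_eq]
  ring

lemma gauss_moment {b : ℝ} (hb : 0 < b) :
    ∫ w : ℝ, w ^ 2 * Real.exp (-b * w ^ 2) = Real.sqrt π / 2 * b ^ (-(3:ℝ)/2) := by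
  have h0 : (fun w : ℝ => w ^ 2 * rexp (-b * w ^ 2))
      = fun w : ℝ => |w| ^ 2 * rexp (-b * |w| ^ 2) := by
    ext w; rw [_root_.sq_abs]
  rw [h0, integral_comp_abs (f := fun x => x ^ 2 * rexp (-b * x ^ 2))]
  have h1 : ∫ x in Ioi (0:ℝ), x ^ 2 * rexp (-b * x ^ 2)
      = ∫ x in Ioi (0:ℝ), x ^ ((2:ℕ):ℝ) * rexp (-b * x ^ ((2:ℕ):ℝ)) := by
    refine setIntegral_congr_fun measurableSet_Ioi (fun x _ => ?_)
    rw [Real.rpow_natCast]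
  rw [h1, _root_.integral_rpow_mul_exp_neg_mul_rpow (by norm_num) (by norm_num) hb]
  rw [show (((2:ℕ):ℝ) + 1) / ((2:ℕ):ℝ) = 3/2 by norm_num, gamma32,
    show -(((2:ℕ):ℝ) + 1) / ((2:ℕ):ℝ) = -(3:ℝ)/2 by norm_num]
  ring

lemma exp_int {c : ℝ} (hc : 0 < c) : ∫ t in Ioi (0:ℝ), rexp (-(c * t)) = 1/c := by
  have := integral_comp_mul_left_Ioi (fun x => rexp (-x)) 0 hc
  simp only [mul_zero] at this
  rw [show (fun t : ℝ => rexp (-(c*t))) = fun t => (fun x => rexp (-x)) (c*t) from rfl, this,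
    integral_exp_neg_Ioi_zero, smul_eq_mul, mul_one, one_div]

lemma shift_integrable {v : ℝ} (hv : 0 < v) :
    IntegrableOn (fun t : ℝ => (t + v) ^ (-(3:ℝ)/2)) (Ioi 0) := by
  have h1 : IntegrableOn (fun u : ℝ => u ^ (-(3:ℝ)/2)) (Ioi v) :=
    integrableOn_Ioi_rpow_of_lt (by norm_num) hv
  have hmp : MeasurePreserving (fun t : ℝ => t + v) volume volume :=
    measurePreserving_add_right volume v
  have hemb : MeasurableEmbedding (fun t : ℝ => t + v) :=
    (Homeomorph.addRight v).measurableEmbedding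
  have := (hmp.integrableOn_comp_preimage hemb (f := fun u : ℝ => u ^ (-(3:ℝ)/2))
    (s := Ioi v)).mpr h1
  have hpre : (fun t : ℝ => t + v) ⁻¹' (Ioi v) = Ioi 0 := by
    ext t; simp [lt_add_iff_pos_left]
  rwa [hpre] at this

lemma gauss_moment_integrable {b : ℝ} (hb : 0 < b) :
    Integrable (fun w : ℝ => w ^ 2 * rexp (-b * w ^ 2)) := by
  have := integrable_rpow_mul_exp_neg_mul_sq hb (s := ((2:ℕ):ℝ)) (by norm_num)
  simpa [Real.rpow_natCast] using this

lemma const_eq : 2 * π * (Real.sqrt π / 2) * (2*π) ^ (-(3:ℝ)/2) = 1 / (2 * Real.sqrt 2) := by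
  have h2π : (0:ℝ) < 2*π := by positivity
  have h32 : (2*π) ^ ((3:ℝ)/2) = (2*π) * Real.sqrt (2*π) := by
    rw [show (3:ℝ)/2 = 1 + 1/2 by norm_num, Real.rpow_add h2π, Real.rpow_one,
      ← Real.sqrt_eq_rpow]
  rw [show (-(3:ℝ)/2) = -((3:ℝ)/2) by norm_num, Real.rpow_neg h2π.le, h32,
    Real.sqrt_mul (by norm_num : (0:ℝ) ≤ 2) π]
  have hπ : 0 < Real.sqrt π := Real.sqrt_pos.mpr pi_pos
  have h2 : 0 < Real.sqrt 2 := by positivity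
  rw [mul_inv_eq_iff_eq_mul₀ (by positivity)]
  rw [div_mul_eq_mul_div, eq_div_iff (by positivity)]
  ring

lemma real_main {v : ℝ} (hv : 0 < v) (s : ℝ) :
    ∫ w : ℝ, rexp (-2 * π * w ^ 2 * v) * (w ^ 2 / (w ^ 2 + s ^ 2))
      = 1 / (2 * Real.sqrt 2) *
        ∫ t in Ioi (0:ℝ), rexp (-2 * π * t * s ^ 2) / (t + v) ^ ((3:ℝ)/2) := by
  set F : ℝ → ℝ → ℝ :=
    fun t w => 2 * π * rexp (-2 * π * t * s ^ 2) * (w ^ 2 * rexp (-(2*π*(t+v)) * w ^ 2)) with hF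
  -- inner integral in t
  have hInner : ∀ w : ℝ,
      ∫ t in Ioi (0:ℝ), F t w = rexp (-2 * π * w ^ 2 * v) * (w ^ 2 / (w ^ 2 + s ^ 2)) := by
    intro w
    rcases eq_or_ne w 0 with hw | hw
    · simp [hF, hw]
    · have hws : (0:ℝ) < w ^ 2 + s ^ 2 := by positivity
      have hc : (0:ℝ) < 2*π*(w ^ 2 + s ^ 2) := by positivity
      have hE : ∀ t : ℝ, F t w
          = (2 * π * w ^ 2 * rexp (-2 * π * w ^ 2 * v)) * rexp (-(2*π*(w ^ 2 + s ^ 2) * t)) := by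
        intro t
        have h1 : rexp (-2 * π * t * s ^ 2) * rexp (-(2*π*(t+v)) * w ^ 2)
            = rexp (-2 * π * w ^ 2 * v) * rexp (-(2*π*(w ^ 2 + s ^ 2) * t)) := by
          rw [← Real.exp_add, ← Real.exp_add]; congr 1; ring
        calc F t w = (2 * π * w ^ 2)
              * (rexp (-2 * π * t * s ^ 2) * rexp (-(2*π*(t+v)) * w ^ 2)) := by rw [hF]; ring
          _ = _ := by rw [h1]; ring
      simp_rw [hE]
      rw [integral_const_mul, exp_int hc]
      field_simp
  -- value of the inner integral in w
  have hFw : ∀ t : ℝ, t ∈ Ioi (0:ℝ) →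
      ∫ w : ℝ, F t w = 1 / (2 * Real.sqrt 2)
        * (rexp (-2 * π * t * s ^ 2) * (t + v) ^ (-(3:ℝ)/2)) := by
    intro t ht
    have htv : (0:ℝ) < t + v := by have := mem_Ioi.mp ht; linarith
    have hb : (0:ℝ) < 2*π*(t+v) := by positivity
    rw [hF]
    rw [integral_const_mul (μ := volume) (r := 2 * π * rexp (-2 * π * t * s ^ 2))
      (f := fun w : ℝ => w ^ 2 * rexp (-(2*π*(t+v)) * w ^ 2))]
    rw [gauss_moment hb]
    rw [Real.mul_rpow (by positivity) htv.le]
    rw [show 2 * π * rexp (-2 * π * t * s ^ 2) * (Real.sqrt π / 2 * ((2*π) ^ (-(3:ℝ)/2) * (t+v) ^ (-(3:ℝ)/2)))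
      = (2 * π * (Real.sqrt π / 2) * (2*π) ^ (-(3:ℝ)/2)) * (rexp (-2 * π * t * s ^ 2) * (t+v) ^ (-(3:ℝ)/2)) by ring]
    rw [const_eq]
  -- integrability on the product
  have hcont : Continuous (Function.uncurry F) := by
    rw [hF]; fun_prop
  have hprod : Integrable (Function.uncurry F) ((volume.restrict (Ioi 0)).prod volume) := by
    rw [integrable_prod_iff hcont.aestronglyMeasurable]
    constructor
    · filter_upwards [ae_restrict_mem measurableSet_Ioi] with t ht
      have htv : (0:ℝ) < 2*π*(t+v) := by have := mem_Ioi.mp ht; positivity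
      have := (gauss_moment_integrable htv).const_mul (2 * π * rexp (-2 * π * t * s ^ 2))
      simpa [hF, Function.uncurry] using this
    · have hnn : ∀ t w : ℝ, 0 ≤ F t w := by
        intro t w; rw [hF]; positivity
      have heq : ∀ t : ℝ, t ∈ Ioi (0:ℝ) →
          (fun t => ∫ w : ℝ, ‖F t w‖) t
            = 1 / (2 * Real.sqrt 2) * (rexp (-2 * π * t * s ^ 2) * (t + v) ^ (-(3:ℝ)/2)) := by
        intro t ht
        have : ∀ w : ℝ, ‖F t w‖ = F t w := fun w => Real.norm_of_nonneg (hnn t w)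
        simp_rw [this]
        exact hFw t ht
      have hg : IntegrableOn
          (fun t : ℝ => 1 / (2 * Real.sqrt 2) * (rexp (-2 * π * t * s ^ 2) * (t + v) ^ (-(3:ℝ)/2)))
          (Ioi 0) := by
        apply Integrable.mono' (((shift_integrable hv).const_mul (1 / (2 * Real.sqrt 2))))
        · apply AEStronglyMeasurable.const_mul
          apply AEStronglyMeasurable.mul
          · exact (Real.continuous_exp.comp (by fun_prop)).aestronglyMeasurable
          · refine ContinuousOn.aestronglyMeasurable ?_ measurableSet_Ioi
            refine ContinuousOn.rpow_const (by fun_prop) fun t ht => Or.inl ?_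
            have := mem_Ioi.mp ht; positivity
        · filter_upwards [ae_restrict_mem measurableSet_Ioi] with t ht
          have ht' := mem_Ioi.mp ht
          have htv : (0:ℝ) < t + v := by linarith
          rw [Real.norm_of_nonneg (by positivity)]
          have hexp : rexp (-2 * π * t * s ^ 2) ≤ 1 := by
            rw [Real.exp_le_one_iff]
            nlinarith [mul_nonneg (mul_nonneg pi_pos.le ht'.le) (sq_nonneg s)]
          have h1 : 0 < (t+v) ^ (-(3:ℝ)/2) := Real.rpow_pos_of_pos htv _
          have h2 : (0:ℝ) ≤ 1 / (2 * Real.sqrt 2) := by positivity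
          calc 1 / (2 * Real.sqrt 2) * (rexp (-2 * π * t * s ^ 2) * (t + v) ^ (-(3:ℝ)/2))
              ≤ 1 / (2 * Real.sqrt 2) * (1 * (t + v) ^ (-(3:ℝ)/2)) := by
                apply mul_le_mul_of_nonneg_left _ h2
                exact mul_le_mul_of_nonneg_right hexp h1.le
            _ = 1 / (2 * Real.sqrt 2) * (t + v) ^ (-(3:ℝ)/2) := by ring
      exact hg.congr (((ae_restrict_mem measurableSet_Ioi).mono fun t ht => (heq t ht).symm))
  calc ∫ w : ℝ, rexp (-2 * π * w ^ 2 * v) * (w ^ 2 / (w ^ 2 + s ^ 2))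
      = ∫ w : ℝ, ∫ t in Ioi (0:ℝ), F t w :=
        integral_congr_ae (Filter.Eventually.of_forall fun w => (hInner w).symm)
    _ = ∫ t in Ioi (0:ℝ), ∫ w : ℝ, F t w := (integral_integral_swap hprod).symm
    _ = ∫ t in Ioi (0:ℝ), 1 / (2 * Real.sqrt 2)
          * (rexp (-2 * π * t * s ^ 2) * (t + v) ^ (-(3:ℝ)/2)) :=
        setIntegral_congr_fun measurableSet_Ioi fun t ht => hFw t ht
    _ = 1 / (2 * Real.sqrt 2) *
        ∫ t in Ioi (0:ℝ), rexp (-2 * π * t * s ^ 2) / (t + v) ^ ((3:ℝ)/2) := by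
        rw [integral_const_mul]
        congr 1
        refine setIntegral_congr_fun measurableSet_Ioi fun t ht => ?_
        have htv : (0:ℝ) < t + v := by have := mem_Ioi.mp ht; linarith
        rw [show (-(3:ℝ)/2) = -((3:ℝ)/2) by norm_num, Real.rpow_neg htv.le]
        ring

theorem gaussian_pole_integral (v : ℝ) (hv : 0 < v) (s : ℝ) :
    ∫ w : ℝ, Complex.exp (-2 * π * w ^ 2 * v) * (w / ((w : ℂ) - Complex.I * s))
      = ((1 / (2 * Real.sqrt 2) *
          ∫ t in Set.Ioi (0 : ℝ), Real.exp (-2 * π * t * s ^ 2) / (t + v) ^ ((3 : ℝ) / 2) : ℝ) : ℂ) := by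
  set g₁ : ℝ → ℝ := fun w => rexp (-2 * π * w ^ 2 * v) * (w ^ 2 / (w ^ 2 + s ^ 2)) with hg₁def
  set g₂ : ℝ → ℝ := fun w => rexp (-2 * π * w ^ 2 * v) * (s * w / (w ^ 2 + s ^ 2)) with hg₂def
  have hexp : ∀ w : ℝ, Complex.exp (-2 * π * w ^ 2 * v) = ((rexp (-2 * π * w ^ 2 * v) : ℝ) : ℂ) := by
    intro w
    rw [Complex.ofReal_exp]
    congr 1
    push_cast
    ring
  have hpt : ∀ w : ℝ, Complex.exp (-2 * π * w ^ 2 * v) * (w / ((w : ℂ) - Complex.I * s))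
      = ((g₁ w : ℝ) : ℂ) + ((g₂ w : ℝ) : ℂ) * Complex.I := by
    intro w
    rcases eq_or_ne w 0 with hw | hw
    · simp [hg₁def, hg₂def, hw]
    · have hws : (0:ℝ) < w ^ 2 + s ^ 2 := by positivity
      have hws' : ((w:ℂ) ^ 2 + (s:ℂ) ^ 2) ≠ 0 := by exact_mod_cast hws.ne'
      have hden : ((w:ℂ) - Complex.I * s) ≠ 0 := by
        intro h
        rw [sub_eq_zero] at h
        have h2 : ((w ^ 2 : ℝ) : ℂ) = ((-(s ^ 2) : ℝ) : ℂ) := by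
          push_cast
          rw [h, mul_pow, Complex.I_sq]
          ring
        have h3 : (w:ℝ) ^ 2 = -(s ^ 2) := by exact_mod_cast h2
        nlinarith [hws]
      rw [hexp w, hg₁def, hg₂def]
      push_cast
      field_simp
      ring_nf
      rw [Complex.I_sq]
      ring
  have h2πv : (0:ℝ) < 2 * π * v := by positivity
  have hq1 : ∀ w : ℝ, |w ^ 2 / (w ^ 2 + s ^ 2)| ≤ 1 := by
    intro w
    rcases eq_or_lt_of_le (by positivity : (0:ℝ) ≤ w ^ 2 + s ^ 2) with h | h
    · simp [← h]
    · rw [abs_div, _root_.abs_of_nonneg (sq_nonneg w), abs_of_pos h, div_le_one h]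
      nlinarith [sq_nonneg s]
  have hq2 : ∀ w : ℝ, |s * w / (w ^ 2 + s ^ 2)| ≤ 1 := by
    intro w
    rcases eq_or_lt_of_le (by positivity : (0:ℝ) ≤ w ^ 2 + s ^ 2) with h | h
    · simp [← h]
    · rw [abs_div, abs_of_pos h, div_le_one h, abs_mul]
      nlinarith [sq_nonneg (|s| - |w|), _root_.sq_abs s, _root_.sq_abs w, abs_nonneg s, abs_nonneg w]
  have hbound : ∀ (q : ℝ → ℝ), (∀ w, |q w| ≤ 1) →
      ∀ w : ℝ, ‖rexp (-2 * π * w ^ 2 * v) * q w‖ ≤ rexp (-(2 * π * v) * w ^ 2) := by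
    intro q hq w
    rw [Real.norm_eq_abs, abs_mul, Real.abs_exp]
    calc rexp (-2 * π * w ^ 2 * v) * |q w| ≤ rexp (-2 * π * w ^ 2 * v) * 1 :=
          mul_le_mul_of_nonneg_left (hq w) (Real.exp_nonneg _)
      _ = rexp (-(2 * π * v) * w ^ 2) := by rw [mul_one]; congr 1; ring
  have hg1 : Integrable g₁ := by
    apply Integrable.mono' (integrable_exp_neg_mul_sq h2πv)
    · apply Measurable.aestronglyMeasurable
      fun_prop
    · exact Filter.Eventually.of_forall (hbound _ hq1)
  have hg2 : Integrable g₂ := by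
    apply Integrable.mono' (integrable_exp_neg_mul_sq h2πv)
    · apply Measurable.aestronglyMeasurable
      fun_prop
    · exact Filter.Eventually.of_forall (hbound _ hq2)
  have hodd : ∫ w : ℝ, g₂ w = 0 := by
    have h := integral_neg_eq_self g₂ (volume : Measure ℝ)
    have h2 : ∀ x : ℝ, g₂ (-x) = -g₂ x := by
      intro x
      rw [hg₂def]
      simp only [neg_sq]
      ring
    rw [funext h2] at h
    simp only [integral_neg] at h
    linarith
  calc ∫ w : ℝ, Complex.exp (-2 * π * w ^ 2 * v) * (w / ((w : ℂ) - Complex.I * s))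
      = ∫ w : ℝ, (((g₁ w : ℝ) : ℂ) + ((g₂ w : ℝ) : ℂ) * Complex.I) :=
        integral_congr_ae (Filter.Eventually.of_forall hpt)
    _ = (∫ w : ℝ, ((g₁ w : ℝ) : ℂ)) + ∫ w : ℝ, ((g₂ w : ℝ) : ℂ) * Complex.I :=
        integral_add hg1.ofReal (hg2.ofReal.mul_const _)
    _ = (((∫ w : ℝ, g₁ w : ℝ)) : ℂ) + (((∫ w : ℝ, g₂ w : ℝ)) : ℂ) * Complex.I := by
        rw [integral_mul_const]
        congr 1
        · exact integral_ofReal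
        · congr 1
          exact integral_ofReal
    _ = _ := by
        rw [hodd, real_main hv s]
        simp
end

section
/- π·cot(πx) = lim_{M→∞} Σ_{m=−M}^{M} 1/(x + m) for every x ∈ ℂ \ ℤ. -/
open Real Complex Filter

/-! Pairing the terms `m` and `-m`, the symmetric partial sums are `1 / x` plus the partial sums
of `∑ (1 / (x - n) + 1 / (x + n))`, whose limit `π cot (π x) - 1 / x` is the logarithmic
derivative of Euler's product for `sin (π x) / (π x)`. -/

theorem Finset.sum_Icc_neg_eq_add_sum_range {M : Type*} [AddCommMonoid M] (f : ℤ → M) (N : ℕ) :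
    ∑ m ∈ Finset.Icc (-(N : ℤ)) N, f m =
      f 0 + ∑ j ∈ Finset.range N, (f (-(j + 1)) + f (j + 1)) := by
  induction N with
  | zero => simp
  | succ N ih =>
    have hIcc : Finset.Icc (-((N + 1 : ℕ) : ℤ)) (N + 1 : ℕ) =
        insert (-((N : ℤ) + 1)) (insert ((N : ℤ) + 1) (Finset.Icc (-(N : ℤ)) N)) := by
      ext m
      simp only [Finset.mem_Icc, Finset.mem_insert]
      omega
    rw [hIcc, Finset.sum_insert (by simp only [Finset.mem_insert, Finset.mem_Icc]; omega),
      Finset.sum_insert (by simp only [Finset.mem_Icc]; omega), ih, Finset.sum_range_succ]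
    abel

theorem cot_partial_fractions (x : ℂ) (hx : ∀ m : ℤ, x ≠ (m : ℂ)) :
    Tendsto (fun M : ℕ => ∑ m ∈ Finset.Icc (-(M : ℤ)) (M : ℤ), 1 / (x + (m : ℂ)))
      atTop (nhds ((π : ℂ) * (Complex.cos (π * x) / Complex.sin (π * x)))) := by
  have hx' : x ∈ integerComplement := by
    rintro ⟨m, rfl⟩
    exact hx m rfl
  have hlim := (tendsto_logDeriv_euler_cot_sub hx').const_add (1 / x)
  rw [add_sub_cancel, Complex.cot_eq_cos_div_sin] at hlim
  refine hlim.congr fun M => ?_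
  rw [Finset.sum_Icc_neg_eq_add_sum_range]
  simp [cotTerm, sub_eq_add_neg]
end
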